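/- Let m ≥ 1, let d ∈ {8,12,16,...}, set α = (d−2)/2, and let C : [0,π] → ℝ^{m×m} be a symmetric-matrix-valued function with continuous entries. If H_n^{(α,1)}(C) is positive semidefinite for every n ∈ ℕ₀ and Σ_{n=1}^∞ n^{α+1} H_n^{(α,1)}(C) converges entrywise, then H_n^{(α,α)}(C) is positive semidefinite for every n ∈ ℕ₀ and Σ_{n=1}^∞ n^{α+1} H_n^{(α,α)}(C) converges entrywise. (By Theorem 1 this says: an isotropic covariance matrix function on the quaternionic projective space P^d(ℍ) is an isotropic covariance matrix function on the sphere S^d.) -/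

import Mathlib

open Filter Matrix

/-- Jacobi polynomial `P_n^{(α,β)}(x)`. -/
noncomputable def jacobiP (α β : ℝ) (n : ℕ) (x : ℝ) : ℝ :=
  (1 / (n.factorial : ℝ)) * ∑ k ∈ Finset.range (n + 1),
    (n.choose k : ℝ) * (∏ i ∈ Finset.Icc (k + 1) n, (α + (i : ℝ))) *
      (∏ j ∈ Finset.Icc 1 k, (α + β + (n : ℝ) + (j : ℝ))) * ((x - 1) / 2) ^ k

/-- The matrix `H_n^{(α,β)}(C)`, defined entrywise by an interval integral. -/
noncomputable def Hmat {m : ℕ} (α β : ℝ) (C : ℝ → Matrix (Fin m) (Fin m) ℝ) (n : ℕ) :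
    Matrix (Fin m) (Fin m) ℝ :=
  Matrix.of fun i j => ∫ θ in (0:ℝ)..Real.pi,
    C θ i j * jacobiP α β n (Real.cos θ) *
      (Real.sin (θ / 2)) ^ (2 * α + 1) * (Real.cos (θ / 2)) ^ (2 * β + 1)

/-- Positive semidefiniteness in the quadratic-form sense. -/
def PSD {m : ℕ} (A : Matrix (Fin m) (Fin m) ℝ) : Prop :=
  ∀ v : Fin m → ℝ, 0 ≤ v ⬝ᵥ A.mulVec v

/-- The series `Σ_{n=0}^∞ f n` converges (partial sums) to `L`. -/
def SeriesTo (f : ℕ → ℝ) (L : ℝ) : Prop :=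
  Filter.Tendsto (fun N => ∑ n ∈ Finset.range N, f n) Filter.atTop (nhds L)

/-- The series `Σ_{n=0}^∞ f n` converges. -/
def SeriesConv (f : ℕ → ℝ) : Prop := ∃ L, SeriesTo f L

/-! Write `α = (d - 2) / 2 = 1 + r` with `r = 2k - 2 ∈ ℕ`. The weight of `H^{(α,α)}` is that of
`H^{(α,1)}` times `cos^{2r}(θ/2) = ((1 + cos θ) / 2)^r`. Iterating the contiguous relation that
raises `β` by one writes `((1 + x) / 2)^r P_n^{(α,α)}` as a combination of `P_n^{(α,1)}, …, P_{n+r}^{(α,1)}` with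
nonnegative coefficients, and evaluating at `x = 1` shows that they are at most `1`. Hence
`H_n^{(α,α)} = ∑_t c_{n,t} H_{n+t}^{(α,1)}` is positive semidefinite. Since the off-diagonal entries
of a symmetric positive semidefinite matrix are bounded by its diagonal entries, the weighted series
of `H^{(α,1)}` converge absolutely, and they dominate those of `H^{(α,α)}`. -/

open Finset

noncomputable def jacobiCoeff (a b : ℝ) (n k : ℕ) : ℝ :=
  (n.choose k : ℝ) * (∏ i ∈ Icc (k + 1) n, (a + (i : ℝ))) *
    (∏ j ∈ Icc 1 k, (a + b + (n : ℝ) + (j : ℝ)))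

lemma jacobiP_eq_sum_jacobiCoeff (a b : ℝ) (n : ℕ) (x : ℝ) :
    jacobiP a b n x = (1 / (n.factorial : ℝ)) *
      ∑ k ∈ range (n + 1), jacobiCoeff a b n k * ((x - 1) / 2) ^ k := rfl

lemma jacobiCoeff_succ_self (a b : ℝ) (n : ℕ) : jacobiCoeff a b n (n + 1) = 0 := by
  simp [jacobiCoeff, Nat.choose_succ_self]

lemma prod_Icc_one_add_succ (c : ℝ) (j : ℕ) :
    ∏ l ∈ Icc 1 (j + 1), (c + (l : ℝ)) = (c + 1) * ∏ l ∈ Icc 1 j, (c + 1 + (l : ℝ)) := by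
  induction j with
  | zero => simp
  | succ j ih =>
    rw [prod_Icc_succ_top (by omega), ih, prod_Icc_succ_top (by omega)]
    push_cast
    ring

lemma jacobiCoeff_contiguous_zero (a b : ℝ) (n : ℕ) :
    (a + b + 2 * n + 2) * jacobiCoeff a (b + 1) n 0 =
      (b + n + 1) * jacobiCoeff a b n 0 + jacobiCoeff a b (n + 1) 0 := by
  simp only [jacobiCoeff, Nat.choose_zero_right, Nat.cast_one, zero_add,
    Icc_eq_empty_of_lt zero_lt_one, prod_empty]
  rw [prod_Icc_succ_top (by omega)]
  push_cast
  ring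

lemma jacobiCoeff_contiguous_succ (a b : ℝ) {n j : ℕ} (hj : j ≤ n) :
    (a + b + 2 * n + 2) * (jacobiCoeff a (b + 1) n (j + 1) + jacobiCoeff a (b + 1) n j) =
      (b + n + 1) * jacobiCoeff a b n (j + 1) + jacobiCoeff a b (n + 1) (j + 1) := by
  set Q := ∏ l ∈ Icc 1 j, (a + b + n + 1 + (l : ℝ))
  have hQ : ∏ l ∈ Icc 1 j, (a + (b + 1) + n + (l : ℝ)) = Q :=
    prod_congr rfl fun l _ => by ring
  have hQ_succ : ∏ l ∈ Icc 1 (j + 1), (a + (b + 1) + n + (l : ℝ)) = Q * (a + b + n + j + 2) := by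
    rw [prod_Icc_succ_top (by omega), hQ]; push_cast; ring
  have hQ_shift : ∏ l ∈ Icc 1 (j + 1), (a + b + n + (l : ℝ)) = (a + b + n + 1) * Q :=
    prod_Icc_one_add_succ _ j
  have hQ_next : ∏ l ∈ Icc 1 (j + 1), (a + b + ((n + 1 : ℕ) : ℝ) + (l : ℝ)) =
      Q * (a + b + n + j + 2) := by
    rw [← hQ_succ]; exact prod_congr rfl fun l _ => by push_cast; ring
  have hchoose : (((n + 1).choose (j + 1) : ℕ) : ℝ) = n.choose j + n.choose (j + 1) := by
    rw [Nat.choose_succ_succ]; push_cast; ring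
  simp only [jacobiCoeff, hQ, hQ_succ, hQ_shift, hQ_next, hchoose]
  rcases hj.lt_or_eq with hlt | rfl
  · set P := ∏ i ∈ Icc (j + 2) n, (a + (i : ℝ))
    have hP : ∏ i ∈ Icc (j + 1) n, (a + (i : ℝ)) = (a + (j + 1)) * P := by
      rw [← mul_prod_Ioc_eq_prod_Icc (by omega), ← Icc_add_one_left_eq_Ioc]; push_cast; rfl
    have hP_succ : ∏ i ∈ Icc (j + 2) (n + 1), (a + (i : ℝ)) = P * (a + n + 1) := by
      rw [prod_Icc_succ_top (by omega)]; push_cast; ring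
    have hchoose_succ : ((j : ℝ) + 1) * n.choose (j + 1) = (n - j) * n.choose j := by
      have := congrArg (Nat.cast (R := ℝ)) (Nat.choose_succ_right_eq n j)
      push_cast [Nat.cast_sub hj] at this
      linarith
    rw [hP, hP_succ]
    linear_combination (P * Q * (b + n + 1)) * hchoose_succ
  · simp only [Nat.choose_succ_self, Nat.choose_self, Icc_eq_empty_of_lt (Nat.lt_succ_self _),
      prod_empty]
    push_cast
    ring

lemma one_add_mul_sum_range {f : ℕ → ℝ} {n : ℕ} (hf : f (n + 1) = 0) (y : ℝ) :
    (1 + y) * ∑ k ∈ range (n + 1), f k * y ^ k =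
      f 0 + ∑ k ∈ range (n + 1), (f (k + 1) + f k) * y ^ (k + 1) := by
  have hsucc : ∑ k ∈ range (n + 1), f k * y ^ k =
      ∑ k ∈ range (n + 1), f (k + 1) * y ^ (k + 1) + f 0 := by
    rw [← add_zero (∑ k ∈ range (n + 1), f k * y ^ k), ← zero_mul (y ^ (n + 1)), ← hf,
      ← sum_range_succ, sum_range_succ', pow_zero, mul_one]
  have hmul : y * ∑ k ∈ range (n + 1), f k * y ^ k = ∑ k ∈ range (n + 1), f k * y ^ (k + 1) := by
    rw [mul_sum]; exact sum_congr rfl fun k _ => by ring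
  rw [add_mul, one_mul, hmul, hsucc, add_comm _ (f 0), add_assoc, ← sum_add_distrib]
  simp only [add_mul]

lemma jacobiCoeff_contiguous_sum (a b : ℝ) (n : ℕ) (y : ℝ) :
    (a + b + 2 * n + 2) * ((1 + y) * ∑ k ∈ range (n + 1), jacobiCoeff a (b + 1) n k * y ^ k) =
      (b + n + 1) * ∑ k ∈ range (n + 1), jacobiCoeff a b n k * y ^ k +
        ∑ k ∈ range (n + 2), jacobiCoeff a b (n + 1) k * y ^ k := by
  have hW : ∑ k ∈ range (n + 1), jacobiCoeff a b n k * y ^ k =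
      ∑ k ∈ range (n + 2), jacobiCoeff a b n k * y ^ k := by
    rw [sum_range_succ _ (n + 1), jacobiCoeff_succ_self, zero_mul, add_zero]
  rw [one_add_mul_sum_range (jacobiCoeff_succ_self _ _ _), hW, mul_sum, ← sum_add_distrib]
  conv_rhs => rw [sum_range_succ']
  rw [mul_add, jacobiCoeff_contiguous_zero, mul_sum, add_comm]
  refine congrArg₂ _ (sum_congr rfl fun k hk => ?_) (by ring)
  rw [← mul_assoc, jacobiCoeff_contiguous_succ a b (by simpa [Nat.lt_succ_iff] using hk)]
  ring

theorem jacobiP_contiguous (a b : ℝ) (n : ℕ) (x : ℝ) :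
    (a + b + 2 * n + 2) * ((1 + x) * jacobiP a (b + 1) n x) =
      2 * (b + n + 1) * jacobiP a b n x + 2 * (n + 1) * jacobiP a b (n + 1) x := by
  have key := jacobiCoeff_contiguous_sum a b n ((x - 1) / 2)
  have hfact : ((n + 1).factorial : ℝ) = (n + 1) * n.factorial := by
    push_cast [Nat.factorial_succ]; ring
  rw [jacobiP_eq_sum_jacobiCoeff, jacobiP_eq_sum_jacobiCoeff, jacobiP_eq_sum_jacobiCoeff, hfact]
  field_simp
  linear_combination 2 * key

lemma jacobiP_one (a b : ℝ) (n : ℕ) :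
    jacobiP a b n 1 = (∏ i ∈ Icc 1 n, (a + (i : ℝ))) / n.factorial := by
  rw [jacobiP_eq_sum_jacobiCoeff, sum_eq_single_of_mem 0 (by simp)
    (fun k _ hk => by simp [zero_pow hk])]
  simp [jacobiCoeff, div_eq_inv_mul]

lemma jacobiP_one_pos {a : ℝ} (ha : -1 < a) (b : ℝ) (n : ℕ) : 0 < jacobiP a b n 1 := by
  rw [jacobiP_one]
  refine div_pos (prod_pos fun i hi => ?_) (by positivity)
  linarith [show (1 : ℝ) ≤ i from mod_cast (mem_Icc.1 hi).1]

lemma monotone_jacobiP_one {a : ℝ} (ha : 0 ≤ a) (b : ℝ) : Monotone fun n => jacobiP a b n 1 := by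
  refine monotone_nat_of_le_succ fun n => ?_
  have hP : 0 ≤ ∏ i ∈ Icc 1 n, (a + (i : ℝ)) := prod_nonneg fun i _ => by positivity
  simp only [jacobiP_one, prod_Icc_succ_top (Nat.le_add_left 1 n), Nat.factorial_succ]
  push_cast
  rw [div_le_div_iff₀ (by positivity) (by positivity)]
  nlinarith [mul_nonneg hP ha, (Nat.cast_nonneg n.factorial : (0 : ℝ) ≤ _)]

lemma half_one_add_mul_jacobiP_eq {a b : ℝ} {n : ℕ} (hD : a + b + 2 * n + 2 ≠ 0) (x : ℝ) :
    (1 + x) / 2 * jacobiP a (b + 1) n x =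
      (b + n + 1) / (a + b + 2 * n + 2) * jacobiP a b n x +
        (n + 1) / (a + b + 2 * n + 2) * jacobiP a b (n + 1) x := by
  field_simp
  linear_combination jacobiP_contiguous a b n x

theorem exists_jacobiP_expansion {a b : ℝ} (ha : -1 < a) (hb : -1 < b) (r n : ℕ) :
    ∃ c : ℕ → ℝ, (∀ t, 0 ≤ c t) ∧ (∀ t, r < t → c t = 0) ∧ ∀ x,
      ((1 + x) / 2) ^ r * jacobiP a (b + r) n x =
        ∑ t ∈ range (r + 1), c t * jacobiP a b (n + t) x := by
  induction r generalizing n with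
  | zero => exact ⟨fun t => if t = 0 then 1 else 0, fun t => by positivity,
      fun t ht => if_neg (by omega), fun x => by simp⟩
  | succ r ih =>
    obtain ⟨c₀, hc₀, hc₀r, hexp₀⟩ := ih n
    obtain ⟨c₁, hc₁, hc₁r, hexp₁⟩ := ih (n + 1)
    have hr : (0 : ℝ) ≤ r := r.cast_nonneg
    have hD : a + (b + r) + 2 * n + 2 ≠ 0 := by linarith
    set l₀ := (b + r + n + 1) / (a + (b + r) + 2 * n + 2)
    set l₁ := (n + 1) / (a + (b + r) + 2 * n + 2)
    have hl₀ : 0 ≤ l₀ := div_nonneg (by linarith) (by linarith)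
    have hl₁ : 0 ≤ l₁ := div_nonneg (by positivity) (by linarith)
    have hstep : ∀ x, (1 + x) / 2 * jacobiP a (b + (r + 1 : ℕ)) n x =
        l₀ * jacobiP a (b + r) n x + l₁ * jacobiP a (b + r) (n + 1) x := fun x => by
      rw [show b + ((r + 1 : ℕ) : ℝ) = b + r + 1 by push_cast; ring]
      exact half_one_add_mul_jacobiP_eq hD x
    refine ⟨fun t => l₀ * c₀ t + l₁ * (if t = 0 then 0 else c₁ (t - 1)),
      fun t => add_nonneg (mul_nonneg hl₀ (hc₀ t)) (mul_nonneg hl₁ (by split_ifs <;> simp [hc₁])),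
      fun t ht => by simp [hc₀r t (by omega), hc₁r (t - 1) (by omega), show t ≠ 0 by omega],
      fun x => ?_⟩
    have hsum₀ : ∑ t ∈ range (r + 2), c₀ t * jacobiP a b (n + t) x =
        ∑ t ∈ range (r + 1), c₀ t * jacobiP a b (n + t) x := by
      rw [sum_range_succ _ (r + 1), hc₀r (r + 1) (by omega), zero_mul, add_zero]
    have hsum₁ : ∑ t ∈ range (r + 2), (if t = 0 then 0 else c₁ (t - 1)) * jacobiP a b (n + t) x =
        ∑ t ∈ range (r + 1), c₁ t * jacobiP a b (n + 1 + t) x := by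
      rw [sum_range_succ']
      simp [add_assoc, add_comm 1]
    simp only [add_mul, mul_assoc, sum_add_distrib, ← mul_sum, hsum₀, hsum₁, ← hexp₀, ← hexp₁,
      pow_succ, hstep]
    ring

-- At `x = 1`, `P_n^{(a,b)}(1) = (a + 1)_n / n!` does not depend on `b` and increases with `n`.
lemma le_one_of_jacobiP_expansion {a b : ℝ} (ha : 0 ≤ a) {r n : ℕ} {c : ℕ → ℝ}
    (hc : ∀ t, 0 ≤ c t)
    (hexp : ∀ x, ((1 + x) / 2) ^ r * jacobiP a (b + r) n x =
      ∑ t ∈ range (r + 1), c t * jacobiP a b (n + t) x)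
    {t : ℕ} (ht : t ≤ r) : c t ≤ 1 := by
  have hpos : ∀ k, 0 < jacobiP a b k 1 := jacobiP_one_pos (by linarith) b
  have hsum : ∑ s ∈ range (r + 1), c s * jacobiP a b (n + s) 1 = jacobiP a b n 1 := by
    rw [← hexp, jacobiP_one, jacobiP_one]; norm_num
  refine le_of_mul_le_mul_right ?_ (hpos (n + t))
  calc c t * jacobiP a b (n + t) 1
      ≤ ∑ s ∈ range (r + 1), c s * jacobiP a b (n + s) 1 :=
        single_le_sum (fun s _ => mul_nonneg (hc s) (hpos _).le) (mem_range.2 (by omega))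
    _ = jacobiP a b n 1 := hsum
    _ ≤ 1 * jacobiP a b (n + t) 1 := by
        rw [one_mul]; exact monotone_jacobiP_one ha b (Nat.le_add_right n t)

lemma continuous_jacobiP (a b : ℝ) (n : ℕ) : Continuous (jacobiP a b n) := by
  unfold jacobiP; fun_prop

lemma cos_half_rpow_add_two_mul {θ : ℝ} (hθ : θ ∈ Set.Icc 0 Real.pi) {p : ℝ} (hp : 0 < p)
    (r : ℕ) :
    Real.cos (θ / 2) ^ (p + 2 * r) = ((1 + Real.cos θ) / 2) ^ r * Real.cos (θ / 2) ^ p := by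
  have hcos : 0 ≤ Real.cos (θ / 2) :=
    Real.cos_nonneg_of_mem_Icc ⟨by linarith [hθ.1, Real.pi_pos], by linarith [hθ.2]⟩
  have hsq : Real.cos (θ / 2) ^ 2 = (1 + Real.cos θ) / 2 := by
    rw [Real.cos_sq, show 2 * (θ / 2) = θ by ring]; ring
  rw [show p + 2 * r = p + ((2 * r : ℕ) : ℝ) by push_cast; ring,
    Real.rpow_add_natCast' hcos (by positivity), pow_mul, hsq, mul_comm]

section Hmat

variable {m : ℕ} {C : ℝ → Matrix (Fin m) (Fin m) ℝ}

lemma continuousOn_Hmat_integrand {a b : ℝ} (ha : 0 ≤ 2 * a + 1) (hb : 0 ≤ 2 * b + 1)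
    (hC : ∀ i j, ContinuousOn (fun θ => C θ i j) (Set.Icc 0 Real.pi)) (n : ℕ) (i j : Fin m) :
    ContinuousOn (fun θ => C θ i j * jacobiP a b n (Real.cos θ) *
      Real.sin (θ / 2) ^ (2 * a + 1) * Real.cos (θ / 2) ^ (2 * b + 1)) (Set.Icc 0 Real.pi) := by
  have hsin := (Real.continuous_rpow_const ha).comp
    (Real.continuous_sin.comp (continuous_id.div_const 2))
  have hcos := (Real.continuous_rpow_const hb).comp
    (Real.continuous_cos.comp (continuous_id.div_const 2))
  exact (((hC i j).mul ((continuous_jacobiP a b n).comp Real.continuous_cos).continuousOn).mul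
    hsin.continuousOn).mul hcos.continuousOn

lemma Hmat_add_nat_eq_sum {a b : ℝ} (ha : 0 ≤ 2 * a + 1) (hb : 0 < 2 * b + 1) {r n : ℕ}
    {c : ℕ → ℝ}
    (hexp : ∀ x, ((1 + x) / 2) ^ r * jacobiP a (b + r) n x =
      ∑ t ∈ range (r + 1), c t * jacobiP a b (n + t) x)
    (hC : ∀ i j, ContinuousOn (fun θ => C θ i j) (Set.Icc 0 Real.pi)) :
    Hmat a (b + r) C n = ∑ t ∈ range (r + 1), c t • Hmat a b C (n + t) := by
  ext i j
  simp only [Hmat, Matrix.sum_apply, Matrix.smul_apply, Matrix.of_apply, smul_eq_mul,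
    ← intervalIntegral.integral_const_mul]
  refine (intervalIntegral.integral_congr fun θ hθ => ?_).trans
    (intervalIntegral.integral_finsetSum fun t _ =>
      ((continuousOn_Hmat_integrand ha hb.le hC (n + t) i j).intervalIntegrable_of_Icc
        Real.pi_pos.le).const_mul (c t))
  rw [Set.uIcc_of_le Real.pi_pos.le] at hθ
  simp only [show 2 * (b + r) + 1 = 2 * b + 1 + 2 * r by ring, cos_half_rpow_add_two_mul hθ hb]
  calc _ = (((1 + Real.cos θ) / 2) ^ r * jacobiP a (b + r) n (Real.cos θ)) *
        (C θ i j * Real.sin (θ / 2) ^ (2 * a + 1) * Real.cos (θ / 2) ^ (2 * b + 1)) := by ring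
    _ = _ := by rw [hexp, sum_mul]; exact sum_congr rfl fun t _ => by ring

lemma Hmat_apply_comm
    (hsym : ∀ θ ∈ Set.Icc (0 : ℝ) Real.pi, (C θ)ᵀ = C θ) (a b : ℝ) (n : ℕ) (i j : Fin m) :
    Hmat a b C n i j = Hmat a b C n j i := by
  refine intervalIntegral.integral_congr fun θ hθ => ?_
  rw [Set.uIcc_of_le Real.pi_pos.le] at hθ
  simp only [← congrFun₂ (hsym θ hθ) i j, transpose_apply]

end Hmat

section PSD

variable {m : ℕ}

lemma PSD.apply_self_nonneg {A : Matrix (Fin m) (Fin m) ℝ} (hA : PSD A) (i : Fin m) :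
    0 ≤ A i i := by
  simpa using hA (Pi.single i 1)

lemma PSD.abs_apply_le {A : Matrix (Fin m) (Fin m) ℝ} (hA : PSD A) {i j : Fin m}
    (hij : A i j = A j i) : |A i j| ≤ (A i i + A j j) / 2 := by
  have hadd := hA (Pi.single i 1 + Pi.single j 1)
  have hsub := hA (Pi.single i 1 - Pi.single j 1)
  simp only [mulVec_add, mulVec_sub, dotProduct_add, add_dotProduct, dotProduct_sub,
    sub_dotProduct, mulVec_single_one, single_dotProduct, col_apply, one_mul] at hadd hsub
  rw [abs_le]
  constructor <;> linarith

lemma PSD.sum_smul {ι : Type*} (s : Finset ι) {c : ι → ℝ} {A : ι → Matrix (Fin m) (Fin m) ℝ}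
    (hc : ∀ t ∈ s, 0 ≤ c t) (hA : ∀ t ∈ s, PSD (A t)) : PSD (∑ t ∈ s, c t • A t) := fun v => by
  rw [sum_mulVec, dotProduct_sum]
  exact sum_nonneg fun t ht => by
    rw [smul_mulVec, dotProduct_smul, smul_eq_mul]; exact mul_nonneg (hc t ht) (hA t ht v)

end PSD

lemma summable_of_seriesConv {f : ℕ → ℝ} (hf : ∀ n, 0 ≤ f n) (h : SeriesConv f) : Summable f :=
  let ⟨L, hL⟩ := h
  ((hasSum_iff_tendsto_nat_of_nonneg hf L).2 hL).summable

lemma Summable.seriesConv {f : ℕ → ℝ} (h : Summable f) : SeriesConv f :=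
  ⟨_, h.hasSum.tendsto_sum_nat⟩

lemma summable_of_abs_le_sum_range_add {f g : ℕ → ℝ} (hg : Summable g) (r : ℕ)
    (h : ∀ n, |f n| ≤ ∑ t ∈ range (r + 1), g (n + t)) : Summable f :=
  (summable_sum fun t _ => (summable_nat_add_iff t).2 hg).of_norm_bounded h

section MatrixSeries

variable {m : ℕ} {A : ℕ → Matrix (Fin m) (Fin m) ℝ} {w : ℕ → ℝ}

lemma summable_mul_abs_of_psd (hw : ∀ n, 0 ≤ w n) (hA : ∀ n, PSD (A n))
    (hAsymm : ∀ n i j, A n i j = A n j i) (hconv : ∀ i, SeriesConv fun n => w n * A n i i)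
    (i j : Fin m) : Summable fun n => w n * |A n i j| := by
  have hdiag : ∀ i, Summable fun n => w n * A n i i := fun i =>
    summable_of_seriesConv (fun n => mul_nonneg (hw n) ((hA n).apply_self_nonneg i)) (hconv i)
  refine Summable.of_nonneg_of_le (fun n => mul_nonneg (hw n) (abs_nonneg _)) (fun n => ?_)
    (((hdiag i).add (hdiag j)).div_const 2)
  have := mul_le_mul_of_nonneg_left ((hA n).abs_apply_le (hAsymm n i j)) (hw n)
  linarith

theorem seriesConv_of_eq_sum_smul {B : ℕ → Matrix (Fin m) (Fin m) ℝ} (hw0 : ∀ n, 0 ≤ w n)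
    (hw : Monotone w) {r : ℕ} {c : ℕ → ℕ → ℝ} (hc0 : ∀ n t, 0 ≤ c n t) (hc1 : ∀ n t, c n t ≤ 1)
    (hB : ∀ n, B n = ∑ t ∈ range (r + 1), c n t • A (n + t)) (hA : ∀ n, PSD (A n))
    (hAsymm : ∀ n i j, A n i j = A n j i) (hconv : ∀ i j, SeriesConv fun n => w n * A n i j)
    (i j : Fin m) : SeriesConv fun n => w n * B n i j := by
  refine (summable_of_abs_le_sum_range_add
    (summable_mul_abs_of_psd hw0 hA hAsymm (fun i => hconv i i) i j) r fun n => ?_).seriesConv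
  rw [hB, Matrix.sum_apply, abs_mul, abs_of_nonneg (hw0 n)]
  refine (mul_le_mul_of_nonneg_left (abs_sum_le_sum_abs _ _) (hw0 n)).trans ?_
  rw [mul_sum]
  refine sum_le_sum fun t _ => ?_
  rw [Matrix.smul_apply, smul_eq_mul, abs_mul, abs_of_nonneg (hc0 n t), ← mul_assoc]
  exact mul_le_mul_of_nonneg_right
    (by nlinarith [hw (Nat.le_add_right n t), hw0 n, hc0 n t, hc1 n t]) (abs_nonneg _)

end MatrixSeries

theorem exists_Hmat_add_nat_eq_sum_smul {a b : ℝ} (ha : 0 ≤ a) (hb : 0 < 2 * b + 1) (r : ℕ)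
    {m : ℕ} {C : ℝ → Matrix (Fin m) (Fin m) ℝ}
    (hC : ∀ i j, ContinuousOn (fun θ => C θ i j) (Set.Icc 0 Real.pi)) :
    ∃ c : ℕ → ℕ → ℝ, (∀ n t, 0 ≤ c n t) ∧ (∀ n t, c n t ≤ 1) ∧
      ∀ n, Hmat a (b + r) C n = ∑ t ∈ range (r + 1), c n t • Hmat a b C (n + t) := by
  choose c hc0 hcr hexp using fun n =>
    exists_jacobiP_expansion (by linarith : -1 < a) (by linarith : -1 < b) r n
  refine ⟨c, hc0, fun n t => ?_, fun n => Hmat_add_nat_eq_sum (by linarith) hb (hexp n) hC⟩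
  rcases le_or_gt t r with ht | ht
  · exact le_one_of_jacobiP_expansion ha (hc0 n) (hexp n) ht
  · simp [hcr n t ht]

theorem stmt9_general (m : ℕ) (d : ℕ) (hd : 8 ≤ d) (hd4 : ∃ k : ℕ, d = 4 * k)
    (C : ℝ → Matrix (Fin m) (Fin m) ℝ)
    (hsym : ∀ θ ∈ Set.Icc (0:ℝ) Real.pi, (C θ)ᵀ = C θ)
    (hcont : ∀ i j, ContinuousOn (fun θ => C θ i j) (Set.Icc 0 Real.pi))
    (hyp : (∀ n, PSD (Hmat (((d : ℝ) - 2) / 2) 1 C n)) ∧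
      (∀ i j, SeriesConv fun n =>
        ((n : ℝ) + 1) ^ ((((d : ℝ) - 2) / 2) + 1) *
          Hmat (((d : ℝ) - 2) / 2) 1 C (n + 1) i j)) :
    (∀ n, PSD (Hmat (((d : ℝ) - 2) / 2) (((d : ℝ) - 2) / 2) C n)) ∧
      (∀ i j, SeriesConv fun n =>
        ((n : ℝ) + 1) ^ ((((d : ℝ) - 2) / 2) + 1) *
          Hmat (((d : ℝ) - 2) / 2) (((d : ℝ) - 2) / 2) C (n + 1) i j) := by
  obtain ⟨hPSD, hconv⟩ := hyp
  obtain ⟨k, rfl⟩ := hd4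
  have hα : (1 : ℝ) + ((2 * k - 2 : ℕ) : ℝ) = (((4 * k : ℕ) : ℝ) - 2) / 2 := by
    push_cast [Nat.cast_sub (by omega : 2 ≤ 2 * k)]; ring
  have hα0 : 0 ≤ (((4 * k : ℕ) : ℝ) - 2) / 2 := by
    rw [← hα]; positivity
  obtain ⟨c, hc0, hc1, hH⟩ :=
    exists_Hmat_add_nat_eq_sum_smul hα0 (by norm_num : (0 : ℝ) < 2 * 1 + 1) (2 * k - 2) hcont
  rw [hα] at hH
  refine ⟨fun n => hH n ▸ PSD.sum_smul _ (fun t _ => hc0 n t) (fun t _ => hPSD _), fun i j => ?_⟩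
  refine seriesConv_of_eq_sum_smul (r := 2 * k - 2) (fun n => by positivity)
    (fun p q hpq => Real.rpow_le_rpow (by positivity) (by gcongr) (by linarith))
    (fun n => hc0 (n + 1)) (fun n => hc1 (n + 1)) (fun n => by rw [hH]; simp only [add_right_comm])
    (fun n => hPSD _) (fun n => Hmat_apply_comm hsym _ _ _) hconv i j

/-- Theorem 2(iii): a covariance structure on the quaternionic projective space
P^d(ℍ) transfers to the sphere S^d, stated via the Theorem-1 characterization. -/
theorem stmt9 (m : ℕ) (hm : 1 ≤ m) (d : ℕ) (hd : 8 ≤ d) (hd4 : ∃ k : ℕ, d = 4 * k)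
    (C : ℝ → Matrix (Fin m) (Fin m) ℝ)
    (hsym : ∀ θ ∈ Set.Icc (0:ℝ) Real.pi, (C θ)ᵀ = C θ)
    (hcont : ∀ i j, ContinuousOn (fun θ => C θ i j) (Set.Icc 0 Real.pi))
    (hyp : (∀ n, PSD (Hmat (((d : ℝ) - 2) / 2) 1 C n)) ∧
      (∀ i j, SeriesConv fun n =>
        ((n : ℝ) + 1) ^ ((((d : ℝ) - 2) / 2) + 1) *
          Hmat (((d : ℝ) - 2) / 2) 1 C (n + 1) i j)) :
    (∀ n, PSD (Hmat (((d : ℝ) - 2) / 2) (((d : ℝ) - 2) / 2) C n)) ∧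
      (∀ i j, SeriesConv fun n =>
        ((n : ℝ) + 1) ^ ((((d : ℝ) - 2) / 2) + 1) *
          Hmat (((d : ℝ) - 2) / 2) (((d : ℝ) - 2) / 2) C (n + 1) i j) :=
  stmt9_general m d hd hd4 C hsym hcont hyp
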